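/- arXiv:2601.03635 — 4 statements merged into one kernel-verified Lean document; each statement's English description precedes it below -/
import Mathlib

section
/- Let f : ℝ → ℝ be a convex function with f(0) = 0, f differentiable at 0 with f'(0) = 0, and suppose f' is differentiable at 0 with second derivative A ≥ 0, i.e. f(t) = (A/2)t² + o(t²) as t → 0. For a < 0 < b, let ℓ(a,b) = ∫_a^b √(1 + f'(t)²) dt be the arc length and r(a,b) = √((b-a)² + (f(b)-f(a))²) the chord length of the graph of f between (a, f(a)) and (b, f(b)). Then lim_{a,b → 0} (ℓ(a,b) - r(a,b))/(b-a)³ = A²/24. -/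
open Real Filter MeasureTheory Set
open scoped Topology
open Asymptotics

/-!
Both lengths are expanded to third order in `d = b - a`; since `a < 0 < b`, both `|a|` and `|b|`
are at most `d`, so `o(a²)` and `o(b²)` are `o(d²)`. As `√(1 + u) = 1 + u / 2 + O(u²)`, the
hypothesis `f'(t) = A t + o(t)` gives the arc length `d + A² (b³ - a³) / 6 + o(d³)`. The chord is
`√(d² + D²)` with `D = f b - f a = (A / 2) (b + a) d + o(d²) = O(d²)`, hence equals
`d + D² / (2 d) + O(D⁴ / d³) = d + A² (b + a)² d / 8 + o(d³)`. The two main terms differ by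
exactly `A² d³ / 24`.
-/

lemma abs_sqrt_one_add_sub_le {u : ℝ} (hu : 0 ≤ u) :
    |√(1 + u) - (1 + u / 2)| ≤ u ^ 2 / 8 := by
  have hupper : √(1 + u) ≤ 1 + u / 2 := by
    rw [sqrt_le_left (by linarith)]
    nlinarith
  have hlower : 1 + u / 2 - u ^ 2 / 8 ≤ √(1 + u) := by
    by_cases hneg : 1 + u / 2 - u ^ 2 / 8 ≤ 0
    · exact hneg.trans (sqrt_nonneg _)
    · rw [le_sqrt (by linarith) (by linarith)]
      nlinarith [pow_nonneg hu 3]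
  rw [abs_le]
  constructor <;> linarith

lemma abs_sqrt_sq_add_sq_sub_le {d D : ℝ} (hd : 0 < d) :
    |√(d ^ 2 + D ^ 2) - (d + D ^ 2 / (2 * d))| ≤ D ^ 4 / 8 / d ^ 3 := by
  have hu := abs_sqrt_one_add_sub_le (sq_nonneg (D / d))
  have hsplit : √(d ^ 2 + D ^ 2) - (d + D ^ 2 / (2 * d))
      = d * (√(1 + (D / d) ^ 2) - (1 + (D / d) ^ 2 / 2)) := by
    rw [show d ^ 2 + D ^ 2 = d ^ 2 * (1 + (D / d) ^ 2) by field_simp, sqrt_mul (sq_nonneg d),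
      sqrt_sq hd.le]
    field_simp
  rw [hsplit, abs_mul, abs_of_pos hd]
  calc d * |√(1 + (D / d) ^ 2) - (1 + (D / d) ^ 2 / 2)| ≤ d * (((D / d) ^ 2) ^ 2 / 8) :=
        mul_le_mul_of_nonneg_left hu hd.le
    _ = D ^ 4 / 8 / d ^ 3 := by field_simp

lemma eventually_fst_neg_snd_pos_nhdsLT_prod :
    ∀ᶠ p : ℝ × ℝ in 𝓝[<] 0 ×ˢ 𝓝[>] 0, p.1 < 0 ∧ 0 < p.2 :=
  prod_mem_prod self_mem_nhdsWithin self_mem_nhdsWithin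

lemma tendsto_fst_nhdsLT_prod : Tendsto (Prod.fst : ℝ × ℝ → ℝ) (𝓝[<] 0 ×ˢ 𝓝[>] 0) (𝓝 0) :=
  tendsto_fst.mono_right nhdsWithin_le_nhds

lemma tendsto_snd_nhdsLT_prod : Tendsto (Prod.snd : ℝ × ℝ → ℝ) (𝓝[<] 0 ×ˢ 𝓝[>] 0) (𝓝 0) :=
  tendsto_snd.mono_right nhdsWithin_le_nhds

lemma tendsto_snd_sub_fst_nhdsLT_prod :
    Tendsto (fun p : ℝ × ℝ => p.2 - p.1) (𝓝[<] 0 ×ˢ 𝓝[>] 0) (𝓝 0) := by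
  simpa using tendsto_snd_nhdsLT_prod.sub tendsto_fst_nhdsLT_prod

lemma isBigO_fst_snd_sub_fst_nhdsLT_prod :
    (fun p : ℝ × ℝ => p.1) =O[𝓝[<] 0 ×ˢ 𝓝[>] 0] fun p => p.2 - p.1 :=
  IsBigO.of_bound 1 <| eventually_fst_neg_snd_pos_nhdsLT_prod.mono fun p ⟨ha, hb⟩ => by
    simp only [norm_eq_abs, one_mul]
    rw [abs_of_neg ha, abs_of_pos (by linarith)]
    linarith

lemma isBigO_snd_snd_sub_fst_nhdsLT_prod :
    (fun p : ℝ × ℝ => p.2) =O[𝓝[<] 0 ×ˢ 𝓝[>] 0] fun p => p.2 - p.1 :=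
  IsBigO.of_bound 1 <| eventually_fst_neg_snd_pos_nhdsLT_prod.mono fun p ⟨ha, hb⟩ => by
    simp only [norm_eq_abs, one_mul]
    rw [abs_of_pos hb, abs_of_pos (by linarith)]
    linarith

lemma Asymptotics.IsLittleO.comp_fst_nhdsLT_prod {g : ℝ → ℝ} {n : ℕ}
    (hg : g =o[𝓝 0] fun t => t ^ n) :
    (fun p : ℝ × ℝ => g p.1) =o[𝓝[<] 0 ×ˢ 𝓝[>] 0] fun p => (p.2 - p.1) ^ n :=
  (hg.comp_tendsto tendsto_fst_nhdsLT_prod).trans_isBigO (isBigO_fst_snd_sub_fst_nhdsLT_prod.pow n)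

lemma Asymptotics.IsLittleO.comp_snd_nhdsLT_prod {g : ℝ → ℝ} {n : ℕ}
    (hg : g =o[𝓝 0] fun t => t ^ n) :
    (fun p : ℝ × ℝ => g p.2) =o[𝓝[<] 0 ×ˢ 𝓝[>] 0] fun p => (p.2 - p.1) ^ n :=
  (hg.comp_tendsto tendsto_snd_nhdsLT_prod).trans_isBigO (isBigO_snd_snd_sub_fst_nhdsLT_prod.pow n)

lemma Asymptotics.IsLittleO.div_pow_snd_sub_fst_nhdsLT_prod {u : ℝ × ℝ → ℝ} {n k : ℕ}
    (hu : u =o[𝓝[<] 0 ×ˢ 𝓝[>] 0] fun p => (p.2 - p.1) ^ (n + k)) :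
    (fun p => u p / (p.2 - p.1) ^ k) =o[𝓝[<] 0 ×ˢ 𝓝[>] 0] fun p => (p.2 - p.1) ^ n := by
  refine IsLittleO.of_bound fun ε hε => ?_
  filter_upwards [hu.def hε, eventually_fst_neg_snd_pos_nhdsLT_prod] with p hp ⟨ha, hb⟩
  have hd : 0 < p.2 - p.1 := by linarith
  rw [norm_div, norm_of_nonneg (pow_pos hd k).le, div_le_iff₀ (pow_pos hd k)]
  simpa [pow_add, mul_assoc, abs_of_pos hd] using hp

lemma Asymptotics.IsLittleO.intervalIntegral_nhdsLT_prod {h : ℝ → ℝ} {n : ℕ}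
    (hh : h =o[𝓝 0] fun t => t ^ n) :
    (fun p : ℝ × ℝ => ∫ t in p.1..p.2, h t) =o[𝓝[<] 0 ×ˢ 𝓝[>] 0]
      fun p => (p.2 - p.1) ^ (n + 1) := by
  refine IsLittleO.of_bound fun ε hε => ?_
  obtain ⟨δ, hδ, hbound⟩ := Metric.eventually_nhds_iff.mp (hh.def hε)
  have hnear : ∀ᶠ p : ℝ × ℝ in 𝓝[<] 0 ×ˢ 𝓝[>] 0, -δ < p.1 ∧ p.2 < δ :=
    (tendsto_fst_nhdsLT_prod.eventually (Ioi_mem_nhds (neg_lt_zero.mpr hδ))).and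
      (tendsto_snd_nhdsLT_prod.eventually (Iio_mem_nhds hδ))
  filter_upwards [eventually_fst_neg_snd_pos_nhdsLT_prod, hnear] with p ⟨ha, hb⟩ ⟨haδ, hbδ⟩
  have hab : p.1 ≤ p.2 := by linarith
  have hpoint : ∀ t ∈ uIoc p.1 p.2, ‖h t‖ ≤ ε * (p.2 - p.1) ^ n := by
    intro t ht
    rw [uIoc_of_le hab] at ht
    have ht_abs : |t| ≤ p.2 - p.1 := abs_le.mpr ⟨by linarith [ht.1], by linarith [ht.2]⟩
    have ht_near : dist t 0 < δ := by
      rw [Real.dist_eq, sub_zero]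
      exact abs_lt.mpr ⟨by linarith [ht.1], by linarith [ht.2]⟩
    calc ‖h t‖ ≤ ε * |t| ^ n := by simpa using hbound ht_near
      _ ≤ ε * (p.2 - p.1) ^ n := by gcongr
  calc ‖∫ t in p.1..p.2, h t‖ ≤ ε * (p.2 - p.1) ^ n * |p.2 - p.1| :=
        intervalIntegral.norm_integral_le_of_norm_le_const hpoint
    _ = ε * ‖(p.2 - p.1) ^ (n + 1)‖ := by
        rw [norm_pow, norm_eq_abs, abs_of_nonneg (by linarith : 0 ≤ p.2 - p.1)]; ring

lemma sqrt_one_add_sq_sub_isLittleO {g : ℝ → ℝ} {A : ℝ}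
    (hg : (fun t => g t - A * t) =o[𝓝 0] fun t => t) :
    (fun t => √(1 + g t ^ 2) - (1 + A ^ 2 / 2 * t ^ 2)) =o[𝓝 0] fun t => t ^ 2 := by
  have hgO : g =O[𝓝 0] fun t => t :=
    (hg.isBigO.add (isBigO_const_mul_self A _ _)).congr_left fun t => by ring
  have hsqrt : (fun t => √(1 + g t ^ 2) - (1 + g t ^ 2 / 2)) =o[𝓝 0] fun t => t ^ 2 := by
    have hbound : (fun t => √(1 + g t ^ 2) - (1 + g t ^ 2 / 2)) =O[𝓝 0] fun t => g t ^ 4 :=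
      IsBigO.of_bound (1 / 8) <| Eventually.of_forall fun t => by
        rw [norm_eq_abs, norm_eq_abs, abs_of_nonneg (by positivity : (0 : ℝ) ≤ g t ^ 4)]
        calc _ ≤ (g t ^ 2) ^ 2 / 8 := abs_sqrt_one_add_sub_le (sq_nonneg (g t))
          _ = 1 / 8 * g t ^ 4 := by ring
    exact hbound.trans_isLittleO ((hgO.pow 4).trans_isLittleO (isLittleO_pow_pow (by norm_num)))
  have hsq : (fun t => g t ^ 2 - A ^ 2 * t ^ 2) =o[𝓝 0] fun t => t ^ 2 :=
    (hg.mul_isBigO (hgO.add (isBigO_const_mul_self A _ _))).congr (fun t => by ring)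
      fun t => by ring
  exact (hsqrt.add (hsq.const_mul_left (1 / 2))).congr_left fun t => by ring

lemma integral_one_add_mul_sq (a b c : ℝ) :
    ∫ t in a..b, (1 + c * t ^ 2) = (b - a) + c / 3 * (b ^ 3 - a ^ 3) := by
  rw [intervalIntegral.integral_add intervalIntegrable_const
    ((by fun_prop : Continuous fun t : ℝ => c * t ^ 2).intervalIntegrable a b)]
  simp [integral_pow]
  ring

lemma integral_sqrt_one_add_sq_sub_isLittleO {g : ℝ → ℝ} {A : ℝ} (hm : Measurable g)
    (hg : (fun t => g t - A * t) =o[𝓝 0] fun t => t) :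
    (fun p : ℝ × ℝ => (∫ t in p.1..p.2, √(1 + g t ^ 2)) -
        ((p.2 - p.1) + A ^ 2 / 6 * (p.2 ^ 3 - p.1 ^ 3)))
      =o[𝓝[<] 0 ×ˢ 𝓝[>] 0] fun p => (p.2 - p.1) ^ 3 := by
  have hrem := sqrt_one_add_sq_sub_isLittleO hg
  have hlim : Tendsto (fun t => √(1 + g t ^ 2)) (𝓝 0) (𝓝 1) := by
    have hpoly : Tendsto (fun t : ℝ => 1 + A ^ 2 / 2 * t ^ 2) (𝓝 0) (𝓝 1) :=
      (by fun_prop : Continuous fun t : ℝ => 1 + A ^ 2 / 2 * t ^ 2).tendsto' 0 1 (by simp)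
    simpa using (hrem.trans_tendsto (by simpa using (continuous_pow 2).tendsto (0 : ℝ))).add hpoly
  have hint : ∀ᶠ p : ℝ × ℝ in 𝓝[<] 0 ×ˢ 𝓝[>] 0,
      IntervalIntegrable (fun t => √(1 + g t ^ 2)) volume p.1 p.2 :=
    hlim.eventually_intervalIntegrable
      (hm.pow_const 2 |>.const_add 1 |>.sqrt).stronglyMeasurable.stronglyMeasurableAtFilter
      (Measure.finiteAt_nhds _ _) tendsto_fst_nhdsLT_prod tendsto_snd_nhdsLT_prod
  refine hrem.intervalIntegral_nhdsLT_prod.congr' ?_ EventuallyEq.rfl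
  filter_upwards [hint] with p hp
  rw [intervalIntegral.integral_sub hp
    ((by fun_prop : Continuous fun t : ℝ => 1 + A ^ 2 / 2 * t ^ 2).intervalIntegrable _ _),
    integral_one_add_mul_sq]
  ring

lemma sqrt_chord_sub_isLittleO {f : ℝ → ℝ} {A : ℝ}
    (hf : (fun t => f t - A / 2 * t ^ 2) =o[𝓝 0] fun t => t ^ 2) :
    (fun p : ℝ × ℝ => √((p.2 - p.1) ^ 2 + (f p.2 - f p.1) ^ 2) -
        ((p.2 - p.1) + A ^ 2 / 8 * (p.2 + p.1) ^ 2 * (p.2 - p.1)))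
      =o[𝓝[<] 0 ×ˢ 𝓝[>] 0] fun p => (p.2 - p.1) ^ 3 := by
  have hDP : (fun p : ℝ × ℝ => (f p.2 - f p.1) - A / 2 * (p.2 ^ 2 - p.1 ^ 2))
      =o[𝓝[<] 0 ×ˢ 𝓝[>] 0] fun p => (p.2 - p.1) ^ 2 :=
    (hf.comp_snd_nhdsLT_prod.sub hf.comp_fst_nhdsLT_prod).congr_left fun p => by ring
  have hP : (fun p : ℝ × ℝ => A / 2 * (p.2 ^ 2 - p.1 ^ 2))
      =O[𝓝[<] 0 ×ˢ 𝓝[>] 0] fun p => (p.2 - p.1) ^ 2 :=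
    (((isBigO_snd_snd_sub_fst_nhdsLT_prod.add isBigO_fst_snd_sub_fst_nhdsLT_prod).const_mul_left
      (A / 2)).mul (isBigO_refl (fun p : ℝ × ℝ => p.2 - p.1) _)).congr (fun p => by ring)
      fun p => by ring
  have hD : (fun p : ℝ × ℝ => f p.2 - f p.1)
      =O[𝓝[<] 0 ×ˢ 𝓝[>] 0] fun p => (p.2 - p.1) ^ 2 :=
    (hDP.isBigO.add hP).congr_left fun p => by ring
  have hquartic : (fun p : ℝ × ℝ => (f p.2 - f p.1) ^ 4 / 8)
      =o[𝓝[<] 0 ×ˢ 𝓝[>] 0] fun p => (p.2 - p.1) ^ (3 + 3) :=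
    ((hD.pow 4).const_mul_left (1 / 8)).trans_isLittleO
      (((isLittleO_pow_pow (by norm_num : 6 < 8)).comp_tendsto
        tendsto_snd_sub_fst_nhdsLT_prod).congr_left fun p => by simp [← pow_mul])
      |>.congr_left fun p => by ring
  have hsqrt : (fun p : ℝ × ℝ => √((p.2 - p.1) ^ 2 + (f p.2 - f p.1) ^ 2) -
        ((p.2 - p.1) + (f p.2 - f p.1) ^ 2 / (2 * (p.2 - p.1))))
      =o[𝓝[<] 0 ×ˢ 𝓝[>] 0] fun p => (p.2 - p.1) ^ 3 := by
    refine IsBigO.trans_isLittleO (IsBigO.of_bound 1 ?_) hquartic.div_pow_snd_sub_fst_nhdsLT_prod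
    filter_upwards [eventually_fst_neg_snd_pos_nhdsLT_prod] with p ⟨ha, hb⟩
    have hd : 0 < p.2 - p.1 := by linarith
    rw [one_mul, norm_eq_abs, norm_of_nonneg (by positivity)]
    exact abs_sqrt_sq_add_sq_sub_le hd
  have hcross : (fun p : ℝ × ℝ => ((f p.2 - f p.1) ^ 2 - (A / 2 * (p.2 ^ 2 - p.1 ^ 2)) ^ 2) / 2)
      =o[𝓝[<] 0 ×ˢ 𝓝[>] 0] fun p => (p.2 - p.1) ^ (3 + 1) :=
    ((hDP.mul_isBigO (hD.add hP)).const_mul_left (1 / 2)).congr (fun p => by ring)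
      fun p => by ring
  refine (hsqrt.add hcross.div_pow_snd_sub_fst_nhdsLT_prod).congr' ?_ EventuallyEq.rfl
  filter_upwards [eventually_fst_neg_snd_pos_nhdsLT_prod] with p ⟨ha, hb⟩
  have hd : p.2 - p.1 ≠ 0 := by linarith
  field_simp
  ring

theorem arc_chord_expansion_general
    (f : ℝ → ℝ) (A : ℝ)
    (hf1 : (fun t => deriv f t - A * t) =o[𝓝 0] fun t => t)
    (hf2 : (fun t => f t - A / 2 * t ^ 2) =o[𝓝 0] fun t => t ^ 2) :
    Tendsto
      (fun p : ℝ × ℝ =>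
        ((∫ t in p.1..p.2, Real.sqrt (1 + (deriv f t) ^ 2)) -
            Real.sqrt ((p.2 - p.1) ^ 2 + (f p.2 - f p.1) ^ 2)) / (p.2 - p.1) ^ 3)
      ((𝓝[<] (0 : ℝ)) ×ˢ (𝓝[>] (0 : ℝ)))
      (𝓝 (A ^ 2 / 24)) := by
  have hexcess : (fun p : ℝ × ℝ => (∫ t in p.1..p.2, √(1 + deriv f t ^ 2)) -
        √((p.2 - p.1) ^ 2 + (f p.2 - f p.1) ^ 2) - A ^ 2 / 24 * (p.2 - p.1) ^ 3)
      =o[𝓝[<] 0 ×ˢ 𝓝[>] 0] fun p => (p.2 - p.1) ^ 3 :=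
    ((integral_sqrt_one_add_sq_sub_isLittleO (measurable_deriv f) hf1).sub
      (sqrt_chord_sub_isLittleO hf2)).congr_left fun p => by ring
  have hlim := hexcess.tendsto_div_nhds_zero.add_const (A ^ 2 / 24)
  rw [zero_add] at hlim
  refine hlim.congr' ?_
  filter_upwards [eventually_fst_neg_snd_pos_nhdsLT_prod] with p ⟨ha, hb⟩
  have hd : p.2 - p.1 ≠ 0 := by linarith
  field_simp
  ring

/-- **Arc/chord expansion for convex plane curves** (Appendix A, Proposition on the
arc/chord curvature): if `f` is convex, `f 0 = 0`, `f` is differentiable at `0` with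
`f'(0) = 0`, and `f` has the second-order expansions `f'(t) = A t + o(t)` and
`f(t) = (A/2) t² + o(t²)` with `A ≥ 0`, then, writing `ℓ(a,b)` for the arc length and
`r(a,b)` for the chord length of the graph of `f` between `(a, f a)` and `(b, f b)`,
we have `(ℓ - r)/(b - a)³ → A²/24` as `a → 0⁻` and `b → 0⁺`. -/
theorem arc_chord_expansion
    (f : ℝ → ℝ) (A : ℝ) (hA : 0 ≤ A)
    (hconv : ConvexOn ℝ Set.univ f)
    (hf0 : f 0 = 0)
    (hd : HasDerivAt f 0 0)
    (hf1 : (fun t => deriv f t - A * t) =o[𝓝 0] fun t => t)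
    (hf2 : (fun t => f t - A / 2 * t ^ 2) =o[𝓝 0] fun t => t ^ 2) :
    Tendsto
      (fun p : ℝ × ℝ =>
        ((∫ t in p.1..p.2, Real.sqrt (1 + (deriv f t) ^ 2)) -
            Real.sqrt ((p.2 - p.1) ^ 2 + (f p.2 - f p.1) ^ 2)) / (p.2 - p.1) ^ 3)
      ((𝓝[<] (0 : ℝ)) ×ˢ (𝓝[>] (0 : ℝ)))
      (𝓝 (A ^ 2 / 24)) :=
  arc_chord_expansion_general f A hf1 hf2
end

section
/- Let σ : [0, L] → ℝ² be a closed convex curve parametrized by arc length, and suppose the turning angle function θ(s) (the angle σ'(s) makes with the x-axis) satisfies θ'(s) ≥ κ > 0 for almost every s. Then for any subarc of σ of length ℓ₀ with endpoints p and q, the chord length satisfies |p - q| ≤ (2/κ) sin(κℓ₀/2). -/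
open Real MeasureTheory Set

/-!
Fix a direction `φ`. The component of `σ b - σ a` along `(cos φ, sin φ)` is
`∫ s in a..b, cos (θ s - φ)`, and the curvature bound says that `θ s - κ s` is monotone (Lebesgue's
theorem `∫ θ' ≤ θ t - θ s` for monotone `θ`). Hence `θ` crosses every level `c` at some point and
moves away from it at speed at least `κ`. Because `θ` turns by at most `2π` along `[a, b]`,
the interval splits at a point `m` into two pieces on each of which `θ - φ` stays within `π` of a
single multiple of `2π`. On each piece `cos (θ - φ)` is bounded by the profile of a circular arc of
curvature `κ` and half-angle `r = κ (b - a) / 2`, centred where `θ` crosses that multiple. The two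
windows of the profile that occur are disjoint, so together they integrate to at most
`κ⁻¹ ∫ u in -r..r, cos u = (2 / κ) sin r`.

The distance on `ℝ × ℝ` is the sup distance, so the four directions `0, π, ±π/2` suffice.
-/

theorem MonotoneOn.monotoneOn_sub_mul_of_ae_le_deriv {θ : ℝ → ℝ} {κ p q : ℝ}
    (hθ : MonotoneOn θ (Icc p q)) (hκθ : ∀ᵐ s ∂(volume.restrict (Icc p q)), κ ≤ deriv θ s) :
    MonotoneOn (fun s => θ s - κ * s) (Icc p q) := by
  intro s hs t ht hst
  have hθst : MonotoneOn θ (uIcc s t) := hθ.mono (uIcc_subset_Icc hs ht)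
  have hle : ∫ _ in s..t, κ ≤ ∫ x in s..t, deriv θ x :=
    intervalIntegral.integral_mono_ae_restrict hst intervalIntegrable_const
      hθst.intervalIntegrable_deriv
      (ae_restrict_of_ae_restrict_of_subset (Icc_subset_Icc hs.1 ht.2) hκθ)
  have hftc : ∫ x in s..t, deriv θ x ≤ θ t - θ s := by
    simpa [max_eq_right (sub_nonneg.2 (hθ hs ht hst))]
      using hθst.intervalIntegral_deriv_mem_uIcc.2
  rw [intervalIntegral.integral_const, smul_eq_mul] at hle
  linarith

theorem Monotone.exists_crossing {G : ℝ → ℝ} (hG : Monotone G) {κ : ℝ} (hκ : 0 < κ) (φ : ℝ) :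
    ∃ c, (∀ s < c, G s + κ * c ≤ φ) ∧ ∀ s > c, φ ≤ G s + κ * c := by
  set S := {s | G s + κ * s < φ}
  have hS : S.Nonempty := by
    set s₀ := min 0 ((φ - G 0) / κ) - 1
    have h₀ : s₀ < (φ - G 0) / κ := by linarith [min_le_right 0 ((φ - G 0) / κ)]
    refine ⟨s₀, ?_⟩
    have := hG (show s₀ ≤ 0 by linarith [min_le_left 0 ((φ - G 0) / κ)])
    have := (lt_div_iff₀' hκ).1 h₀
    show G s₀ + κ * s₀ < φ
    linarith
  have hSbdd : BddAbove S := by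
    refine ⟨max 0 ((φ - G 0) / κ), fun s (hs : G s + κ * s < φ) => ?_⟩
    rcases le_total s 0 with h | h
    · exact h.trans (le_max_left _ _)
    · refine le_max_of_le_right ((le_div_iff₀' hκ).2 ?_)
      linarith [hG h]
  refine ⟨sSup S, fun s hs => ?_, fun s hs => ?_⟩
  · by_contra! h
    obtain ⟨t, ht, hst⟩ := exists_lt_of_lt_csSup hS
      (max_lt hs ((div_lt_iff₀' hκ).2 (by linarith) : (φ - G s) / κ < sSup S))
    have ht' : G t + κ * t < φ := ht
    have := (div_lt_iff₀' hκ).1 (lt_of_le_of_lt (le_max_right _ _) hst)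
    linarith [hG (le_of_lt (lt_of_le_of_lt (le_max_left _ _) hst))]
  · by_contra! h
    obtain ⟨t, hct, hts⟩ := exists_between
      (lt_min hs ((lt_div_iff₀' hκ).2 (by linarith) : sSup S < (φ - G s) / κ))
    have htS : t ∈ S := by
      have := (lt_div_iff₀' hκ).1 (lt_of_lt_of_le hts (min_le_right _ _))
      show G t + κ * t < φ
      linarith [hG (le_of_lt (lt_of_lt_of_le hts (min_le_left _ _)))]
    exact absurd (le_csSup hSbdd htS) (not_le.2 hct)

theorem MonotoneOn.exists_mul_abs_sub_le_abs_sub {f : ℝ → ℝ} {κ α β : ℝ}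
    (hf : MonotoneOn (fun s => f s - κ * s) (Icc α β)) (hκ : 0 < κ) (hαβ : α ≤ β) (φ : ℝ) :
    ∃ c, (∀ s ∈ Icc α β, κ * |s - c| ≤ |f s - φ|) ∧
      f α - φ ≤ κ * (α - c) ∧ κ * (β - c) ≤ f β - φ := by
  -- Cross for the extension of `f` by slope `κ` outside `[α, β]`: this yields the boundary bounds.
  obtain ⟨c, hlt, hgt⟩ :=
    (monotoneOn_iff_monotone.1 hf).IccExtend hαβ |>.exists_crossing hκ φ
  have hα := hlt (min α c - 1) (by linarith [min_le_right α c])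
  have hβ := hgt (max β c + 1) (by linarith [le_max_right β c])
  rw [IccExtend_of_le_left _ _ (by linarith [min_le_left α c])] at hα
  rw [IccExtend_of_right_le _ _ (by linarith [le_max_left β c])] at hβ
  refine ⟨c, fun s hs => ?_, by linarith, by linarith⟩
  rcases lt_trichotomy s c with h | rfl | h
  · have := hlt s h
    rw [IccExtend_of_mem _ _ hs] at this
    rw [abs_of_neg (sub_neg.2 h), abs_of_nonpos (by linarith [mul_pos hκ (sub_pos.2 h)])]
    linarith
  · simp
  · have := hgt s h
    rw [IccExtend_of_mem _ _ hs] at this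
    rw [abs_of_pos (sub_pos.2 h), abs_of_nonneg (by linarith [mul_pos hκ (sub_pos.2 h)])]
    linarith

theorem MonotoneOn.exists_le_on_Ico_lt_on_Ioc {f : ℝ → ℝ} {a b : ℝ}
    (hf : MonotoneOn f (Icc a b)) (hab : a ≤ b) (ℓ : ℝ) :
    ∃ m ∈ Icc a b, (∀ s ∈ Ico a m, f s ≤ ℓ) ∧ ∀ s ∈ Ioc m b, ℓ < f s := by
  set S := insert a {s ∈ Icc a b | f s ≤ ℓ}
  have hSbdd : BddAbove S := ⟨b, by rintro s (rfl | hs); exacts [hab, hs.1.2]⟩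
  refine ⟨sSup S, ⟨le_csSup hSbdd (mem_insert a _), csSup_le (insert_nonempty _ _) ?_⟩,
    fun s hs => ?_, fun s hs => ?_⟩
  · rintro s (rfl | hs); exacts [hab, hs.1.2]
  · obtain ⟨t, ht, hst⟩ := exists_lt_of_lt_csSup (insert_nonempty _ _) hs.2
    rcases ht with rfl | ht
    · exact absurd hs.1 (not_le.2 hst)
    · exact (hf ⟨hs.1, hst.le.trans ht.1.2⟩ ht.1 hst.le).trans ht.2
  · by_contra! h
    have has : a ≤ s := (le_csSup hSbdd (mem_insert a _)).trans hs.1.le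
    exact absurd (le_csSup hSbdd (mem_insert_of_mem a ⟨⟨has, hs.2⟩, h⟩)) (not_le.2 hs.1)

/-- Along a circle of curvature `κ`, the tangent at arc length `s` makes the angle `κ (s - c)` with
the tangent at `c`. `cosClamp r (κ (s - c))` is the cosine of this angle on the arc of half-angle
`r` around `c`, continued by the constant `cos r` beyond the arc. -/
noncomputable def cosClamp (r u : ℝ) : ℝ := cos (max (-r) (min r u))

section cosClamp

variable {r : ℝ}

theorem continuous_cosClamp (r : ℝ) : Continuous (cosClamp r) :=
  continuous_cos.comp (continuous_const.max (continuous_const.min continuous_id))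

theorem intervalIntegrable_cosClamp (r x y : ℝ) : IntervalIntegrable (cosClamp r) volume x y :=
  (continuous_cosClamp r).intervalIntegrable x y

theorem cosClamp_of_abs_le {u : ℝ} (hu : |u| ≤ r) : cosClamp r u = cos u := by
  rw [abs_le] at hu
  rw [cosClamp, min_eq_right hu.2, max_eq_right hu.1]

theorem cosClamp_of_le_abs (hr : 0 ≤ r) {u : ℝ} (hu : r ≤ |u|) : cosClamp r u = cos r := by
  rcases le_abs'.1 hu with hu | hu
  · rw [cosClamp, min_eq_right (by linarith), max_eq_left hu, cos_neg]
  · rw [cosClamp, min_eq_left hu, max_eq_right (by linarith)]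

theorem cos_le_cosClamp (hr : 0 ≤ r) (hrπ : r ≤ π) (u : ℝ) : cos r ≤ cosClamp r u := by
  rcases le_total |u| r with hu | hu
  · rw [cosClamp_of_abs_le hu, ← cos_abs u]
    exact cos_le_cos_of_nonneg_of_le_pi (abs_nonneg u) hrπ hu
  · rw [cosClamp_of_le_abs hr hu]

theorem cos_le_cosClamp_of_abs_le_abs (hr : 0 ≤ r) {x u : ℝ} (hx : |x| ≤ π) (hux : |u| ≤ |x|) :
    cos x ≤ cosClamp r u := by
  rw [← cos_abs x]
  rcases le_total |u| r with hu | hu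
  · rw [cosClamp_of_abs_le hu, ← cos_abs u]
    exact cos_le_cos_of_nonneg_of_le_pi (abs_nonneg u) hx hux
  · rw [cosClamp_of_le_abs hr hu]
    exact cos_le_cos_of_nonneg_of_le_pi hr hx (hu.trans hux)

theorem mul_cos_le_integral_cosClamp (hr : 0 ≤ r) (hrπ : r ≤ π) {x y : ℝ} (hyx : y ≤ x) :
    (x - y) * cos r ≤ ∫ u in y..x, cosClamp r u := by
  simpa using intervalIntegral.integral_mono_on hyx intervalIntegrable_const
    (intervalIntegrable_cosClamp r y x) fun u _ => cos_le_cosClamp hr hrπ u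

theorem integral_cosClamp_of_le_abs (hr : 0 ≤ r) {x y : ℝ} (h : ∀ u ∈ uIcc y x, r ≤ |u|) :
    ∫ u in y..x, cosClamp r u = (x - y) * cos r := by
  rw [intervalIntegral.integral_congr fun u hu => cosClamp_of_le_abs hr (h u hu)]
  simp

theorem integral_cosClamp_neg_self (hr : 0 ≤ r) : ∫ u in -r..r, cosClamp r u = 2 * sin r := by
  rw [intervalIntegral.integral_congr fun u hu => cosClamp_of_abs_le (abs_le.2 ?_), integral_cos,
    sin_neg, two_mul, sub_neg_eq_add]
  rwa [uIcc_of_le (neg_le_self hr)] at hu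

theorem integral_cosClamp_le (hr : 0 ≤ r) (hrπ : r ≤ π) (x y : ℝ) :
    ∫ u in y..x, cosClamp r u ≤ (x - y - 2 * r) * cos r + 2 * sin r := by
  set Y := min y (-r)
  set X := max x r
  have hi := intervalIntegrable_cosClamp r
  have outer : ∫ u in Y..X, cosClamp r u = (X - Y - 2 * r) * cos r + 2 * sin r := by
    rw [← intervalIntegral.integral_add_adjacent_intervals (hi Y (-r)) (hi (-r) X),
      ← intervalIntegral.integral_add_adjacent_intervals (hi (-r) r) (hi r X),
      integral_cosClamp_neg_self hr, integral_cosClamp_of_le_abs hr,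
      integral_cosClamp_of_le_abs hr]
    · ring
    · intro u hu
      rw [uIcc_of_le (le_max_right x r)] at hu
      exact hu.1.trans (le_abs_self u)
    · intro u hu
      rw [uIcc_of_le (min_le_right y (-r))] at hu
      exact le_abs'.2 (Or.inl hu.2)
  have inner : ∫ u in Y..X, cosClamp r u =
      (∫ u in Y..y, cosClamp r u) + (∫ u in y..x, cosClamp r u) + ∫ u in x..X, cosClamp r u := by
    rw [intervalIntegral.integral_add_adjacent_intervals (hi Y y) (hi y x),
      intervalIntegral.integral_add_adjacent_intervals (hi Y x) (hi x X)]
  have := mul_cos_le_integral_cosClamp hr hrπ (min_le_left y (-r))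
  have := mul_cos_le_integral_cosClamp hr hrπ (le_max_left x r)
  linarith

theorem integral_cosClamp_add_integral_cosClamp_le (hr : 0 ≤ r) (hrπ : r ≤ π)
    {x₁ y₁ x₂ y₂ : ℝ} (hgap : x₂ ≤ y₁) (hlen : x₁ - y₁ + (x₂ - y₂) = 2 * r) :
    (∫ u in y₁..x₁, cosClamp r u) + ∫ u in y₂..x₂, cosClamp r u ≤ 2 * sin r := by
  have hi := intervalIntegrable_cosClamp r
  have := intervalIntegral.integral_add_adjacent_intervals (hi y₂ x₂) (hi x₂ y₁)
  have := intervalIntegral.integral_add_adjacent_intervals (hi y₂ y₁) (hi y₁ x₁)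
  have hupper := integral_cosClamp_le hr hrπ x₁ y₂
  rw [show x₁ - y₂ - 2 * r = y₁ - x₂ by linarith] at hupper
  have := mul_cos_le_integral_cosClamp hr hrπ hgap
  linarith

end cosClamp

theorem MonotoneOn.intervalIntegrable_cos_sub {f : ℝ → ℝ} {a b : ℝ}
    (hf : MonotoneOn f (uIcc a b)) (φ : ℝ) :
    IntervalIntegrable (fun s => cos (f s - φ)) volume a b := by
  refine intervalIntegrable_const.mono_fun' ?_ (ae_of_all _ fun s => abs_cos_le_one (f s - φ))
  exact (measurable_cos.comp_aemeasurable ((aemeasurable_restrict_of_monotoneOn measurableSet_uIoc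
    (hf.mono uIoc_subset_uIcc)).sub_const φ)).aestronglyMeasurable

theorem sub_mul_cos_add_sub_mul_sin_eq_integral {σ : ℝ → ℝ × ℝ} {θ : ℝ → ℝ} {a b φ : ℝ}
    (hab : a ≤ b) (hσ : ∀ s ∈ Icc a b, HasDerivAt σ (cos (θ s), sin (θ s)) s)
    (hint : IntervalIntegrable (fun s => cos (θ s - φ)) volume a b) :
    ((σ b).1 - (σ a).1) * cos φ + ((σ b).2 - (σ a).2) * sin φ = ∫ s in a..b, cos (θ s - φ) := by
  let L : ℝ × ℝ →L[ℝ] ℝ :=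
    cos φ • ContinuousLinearMap.fst ℝ ℝ ℝ + sin φ • ContinuousLinearMap.snd ℝ ℝ ℝ
  rw [intervalIntegral.integral_eq_sub_of_hasDerivAt (f := fun s => L (σ s)) (fun s hs => ?_) hint]
  · simp only [add_apply, smul_apply, ContinuousLinearMap.coe_fst', ContinuousLinearMap.coe_snd',
      smul_eq_mul, L]
    ring
  rw [uIcc_of_le hab] at hs
  refine (L.hasFDerivAt.comp_hasDerivAt s (hσ s hs)).congr_deriv ?_
  simp only [add_apply, smul_apply, ContinuousLinearMap.coe_fst', ContinuousLinearMap.coe_snd',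
    smul_eq_mul, cos_sub, L]
  ring

theorem MonotoneOn.integral_cos_sub_le {f : ℝ → ℝ} {κ a b : ℝ}
    (hf : MonotoneOn (fun s => f s - κ * s) (Icc a b)) (hκ : 0 < κ) (hab : a ≤ b)
    (hwind : f b ≤ f a + 2 * π) (φ : ℝ) :
    ∫ s in a..b, cos (f s - φ) ≤ 2 / κ * sin (κ * (b - a) / 2) := by
  have hfm : MonotoneOn f (Icc a b) := fun s hs t ht hst => by
    linarith [hf hs ht hst, mul_le_mul_of_nonneg_left hst hκ.le]
  set r := κ * (b - a) / 2 with hr_def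
  have hr : 0 ≤ r := div_nonneg (mul_nonneg hκ.le (sub_nonneg.2 hab)) zero_le_two
  have hrπ : r ≤ π := by
    have := hf ⟨le_rfl, hab⟩ ⟨hab, le_rfl⟩ hab
    simp only at this
    rw [hr_def, mul_sub]
    linarith
  -- `ℓ ≡ φ + π (mod 2π)` is the first direction opposite to `φ` after `f a`; `f - φ` stays within
  -- `π` of `ℓ - π - φ` before the split point `m` and within `π` of `ℓ + π - φ` after it.
  set ℓ := toIocMod two_pi_pos (f a) (φ + π)
  obtain ⟨hℓa, hℓb⟩ := toIocMod_mem_Ioc two_pi_pos (f a) (φ + π)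
  set n := toIocDiv two_pi_pos (f a) (φ + π)
  have hℓ : ℓ = φ + π - n * (2 * π) := by rw [← zsmul_eq_mul, self_sub_toIocDiv_zsmul]
  have hcos₁ (s : ℝ) : cos (f s - (ℓ - π)) = cos (f s - φ) := by
    rw [hℓ, ← cos_add_int_mul_two_pi (f s - φ) n]
    congr 1
    ring
  have hcos₂ (s : ℝ) : cos (f s - (ℓ + π)) = cos (f s - φ) := by
    rw [hℓ, ← cos_add_int_mul_two_pi (f s - φ) (n - 1)]
    push_cast
    congr 1
    ring
  obtain ⟨m, hm, hbelow, habove⟩ := hfm.exists_le_on_Ico_lt_on_Ioc hab ℓ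
  obtain ⟨c₁, hc₁, hc₁a, -⟩ := hf.exists_mul_abs_sub_le_abs_sub hκ hab (ℓ - π)
  obtain ⟨c₂, hc₂, -, hc₂b⟩ := hf.exists_mul_abs_sub_le_abs_sub hκ hab (ℓ + π)
  have hint (p q : ℝ) (hp : p ∈ Icc a b) (hq : q ∈ Icc a b) :
      IntervalIntegrable (fun s => cos (f s - φ)) volume p q :=
    (hfm.mono (uIcc_subset_Icc hp hq)).intervalIntegrable_cos_sub φ
  have hmodel (c p q : ℝ) :
      IntervalIntegrable (fun s => cosClamp r (κ * s - κ * c)) volume p q :=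
    ((continuous_cosClamp r).comp (by fun_prop)).intervalIntegrable p q
  have hpoint (c φ' s : ℝ) (h₁ : |f s - φ'| ≤ π) (h₂ : κ * |s - c| ≤ |f s - φ'|) :
      cos (f s - φ') ≤ cosClamp r (κ * s - κ * c) :=
    cos_le_cosClamp_of_abs_le_abs hr h₁ (by rwa [← mul_sub, abs_mul, abs_of_pos hκ])
  have h₁ : ∫ s in a..m, cos (f s - φ) ≤
      κ⁻¹ * ∫ u in κ * a - κ * c₁..κ * m - κ * c₁, cosClamp r u := by
    rw [← smul_eq_mul, ← intervalIntegral.integral_comp_mul_sub _ hκ.ne']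
    refine intervalIntegral.integral_mono_on_of_le_Ioo hm.1 (hint a m ⟨le_rfl, hab⟩ hm)
      (hmodel c₁ a m) fun s hs => ?_
    have hsI : s ∈ Icc a b := ⟨hs.1.le, hs.2.le.trans hm.2⟩
    have := hbelow s ⟨hs.1.le, hs.2⟩
    have := hfm ⟨le_rfl, hab⟩ hsI hs.1.le
    rw [← hcos₁]
    exact hpoint c₁ _ s (abs_le.2 ⟨by linarith, by linarith⟩) (hc₁ s hsI)
  have h₂ : ∫ s in m..b, cos (f s - φ) ≤
      κ⁻¹ * ∫ u in κ * m - κ * c₂..κ * b - κ * c₂, cosClamp r u := by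
    rw [← smul_eq_mul, ← intervalIntegral.integral_comp_mul_sub _ hκ.ne']
    refine intervalIntegral.integral_mono_on_of_le_Ioo hm.2 (hint m b hm ⟨hab, le_rfl⟩)
      (hmodel c₂ m b) fun s hs => ?_
    have hsI : s ∈ Icc a b := ⟨hm.1.trans hs.1.le, hs.2.le⟩
    have := habove s ⟨hs.1, hs.2.le⟩
    have := hfm hsI ⟨hab, le_rfl⟩ hs.2.le
    rw [← hcos₂]
    exact hpoint c₂ _ s (abs_le.2 ⟨by linarith, by linarith⟩) (hc₂ s hsI)
  -- The windows are disjoint because `f` turns by at most `2π`: `κ (b - c₂) ≤ κ (a - c₁)`.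
  have hmodel_le := integral_cosClamp_add_integral_cosClamp_le hr hrπ
    (x₁ := κ * m - κ * c₁) (y₁ := κ * a - κ * c₁) (x₂ := κ * b - κ * c₂) (y₂ := κ * m - κ * c₂)
    (by linarith [mul_sub κ b c₂, mul_sub κ a c₁]) (by rw [hr_def]; ring)
  rw [← intervalIntegral.integral_add_adjacent_intervals (hint a m ⟨le_rfl, hab⟩ hm)
    (hint m b hm ⟨hab, le_rfl⟩)]
  calc _ ≤ κ⁻¹ * ((∫ u in κ * a - κ * c₁..κ * m - κ * c₁, cosClamp r u)
        + ∫ u in κ * m - κ * c₂..κ * b - κ * c₂, cosClamp r u) := by rw [mul_add]; linarith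
    _ ≤ κ⁻¹ * (2 * sin r) := by gcongr
    _ = 2 / κ * sin r := by ring

theorem global_arc_chord_convex_plane_general
    (L κ : ℝ) (hκ : 0 < κ)
    (σ : ℝ → ℝ × ℝ) (θ : ℝ → ℝ)
    (hmono : MonotoneOn θ (Set.Icc 0 L))
    (hderiv : ∀ s ∈ Set.Icc (0:ℝ) L, HasDerivAt σ (Real.cos (θ s), Real.sin (θ s)) s)
    (hturn : θ L = θ 0 + 2 * Real.pi)
    (hcurv : ∀ᵐ s ∂(volume.restrict (Set.Icc (0:ℝ) L)), κ ≤ deriv θ s)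
    (a b : ℝ) (ha : 0 ≤ a) (hab : a ≤ b) (hb : b ≤ L) :
    dist (σ a) (σ b) ≤ 2 / κ * Real.sin (κ * (b - a) / 2) := by
  have hsub : Icc a b ⊆ Icc 0 L := Icc_subset_Icc ha hb
  have hwind : θ b ≤ θ a + 2 * π := by
    have hL : 0 ≤ L := ha.trans (hab.trans hb)
    have := hmono (hsub (right_mem_Icc.2 hab)) (right_mem_Icc.2 hL) hb
    have := hmono (left_mem_Icc.2 hL) (hsub (left_mem_Icc.2 hab)) ha
    linarith
  have hproj (φ : ℝ) : ((σ b).1 - (σ a).1) * cos φ + ((σ b).2 - (σ a).2) * sin φ ≤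
      2 / κ * sin (κ * (b - a) / 2) := by
    rw [sub_mul_cos_add_sub_mul_sin_eq_integral hab (fun s hs => hderiv s (hsub hs))
      ((hmono.mono (uIcc_of_le hab ▸ hsub)).intervalIntegrable_cos_sub φ)]
    exact ((hmono.monotoneOn_sub_mul_of_ae_le_deriv hcurv).mono hsub).integral_cos_sub_le
      hκ hab hwind φ
  have h₁ := hproj 0
  have h₂ := hproj π
  have h₃ := hproj (π / 2)
  have h₄ := hproj (-(π / 2))
  simp only [cos_zero, sin_zero, cos_pi, sin_pi, cos_pi_div_two, sin_pi_div_two, cos_neg,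
    sin_neg] at h₁ h₂ h₃ h₄
  rw [Prod.dist_eq, dist_comm, dist_comm (σ a).2, Real.dist_eq, Real.dist_eq]
  exact max_le (abs_le.2 ⟨by linarith, by linarith⟩) (abs_le.2 ⟨by linarith, by linarith⟩)

/-- **Global arc/chord comparison for convex plane curves with curvature `≥ κ`**
(Theorem 2.8 of the paper): if `σ : [0, L] → ℝ²` is a closed convex curve parametrized
by arc length whose turning angle `θ` satisfies `θ'(s) ≥ κ > 0` a.e., then every subarc
with endpoints `σ a`, `σ b` (of length `ℓ₀ = b - a`) has chord length at most
`(2/κ)·sin(κ ℓ₀ / 2)`. -/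
theorem global_arc_chord_convex_plane
    (L κ : ℝ) (hL : 0 < L) (hκ : 0 < κ)
    (σ : ℝ → ℝ × ℝ) (θ : ℝ → ℝ)
    (hmono : MonotoneOn θ (Set.Icc 0 L))
    (hderiv : ∀ s ∈ Set.Icc (0:ℝ) L, HasDerivAt σ (Real.cos (θ s), Real.sin (θ s)) s)
    (hclosed : σ 0 = σ L)
    (hturn : θ L = θ 0 + 2 * Real.pi)
    (hcurv : ∀ᵐ s ∂(volume.restrict (Set.Icc (0:ℝ) L)), κ ≤ deriv θ s)
    (a b : ℝ) (ha : 0 ≤ a) (hab : a ≤ b) (hb : b ≤ L) :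
    dist (σ a) (σ b) ≤ 2 / κ * Real.sin (κ * (b - a) / 2) :=
  global_arc_chord_convex_plane_general L κ hκ σ θ hmono hderiv hturn hcurv a b ha hab hb
end

section
/- Let f : ℝ → ℝ be convex with f(0) = 0, differentiable at 0 with f'(0) = 0, and with second-order expansion f(t) = (A/2)t² + o(t²), A ≥ 0. For t₁ < 0 < t₃ and t₂ = 0, let p_i = (t_i, f(t_i)) and let 𝒜 be the area of the triangle p₁p₂p₃. Then 4𝒜/(|p₁p₂|·|p₂p₃|·|p₃p₁|) → A as t₁ → 0⁻ and t₃ → 0⁺. That is, the osculating (Menger) curvature of the graph of f at the origin equals A. -/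
/-!
Writing `q(t) = f(t)/t`, the Menger curvature of `(t₁, f t₁)`, `(0, 0)`, `(t₃, f t₃)` is exactly
`2 |(q t₃ - q t₁)/(t₃ - t₁)|`, twice the second divided difference of `f` at `t₁, 0, t₃`. Since
`q(t)/t → A/2`, the chord slope of `q` across `0` is a convex combination of values `q(tᵢ)/tᵢ`
(weights `-t₁/(t₃-t₁)` and `t₃/(t₃-t₁)`), hence tends to `A/2`.
-/

open Real Filter Set
open scoped Topology

/-- The Menger (osculating) curvature `χ₀(p,q,r) = 4·Area(△pqr)/(|pq||qr||rp|)`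
of three points in `ℝ²`, the area being computed by the cross-product formula. -/
noncomputable def mengerPts (p q r : ℝ × ℝ) : ℝ :=
  2 * |(q.1 - p.1) * (r.2 - p.2) - (q.2 - p.2) * (r.1 - p.1)| /
    (dist p q * dist q r * dist r p)

theorem tendsto_fst_nhdsLT_prod_s5 {α β : Type*} [TopologicalSpace α] [Preorder α] {a : α}
    {l : Filter β} : Tendsto Prod.fst (𝓝[<] a ×ˢ l) (𝓝[≠] a) :=
  tendsto_fst.mono_right (nhdsWithin_mono _ fun _ h ↦ h.ne)

theorem tendsto_snd_prod_nhdsGT {α β : Type*} [TopologicalSpace β] [Preorder β] {b : β}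
    {l : Filter α} : Tendsto Prod.snd (l ×ˢ 𝓝[>] b) (𝓝[≠] b) :=
  tendsto_snd.mono_right (nhdsWithin_mono _ fun _ h ↦ h.ne')

/-- `dist` on `ℝ × ℝ` is the sup distance, so the side lengths are the horizontal
distances `-t₁`, `t₃`, `t₃ - t₁` as long as the graph stays within the cone `|y| ≤ |t|`. -/
theorem mengerPts_graph_eq_two_mul_abs_slope (f : ℝ → ℝ) {t₁ t₃ : ℝ} (h₁ : t₁ < 0)
    (h₃ : 0 < t₃) (hf₁ : |f t₁| ≤ |t₁|) (hf₃ : |f t₃| ≤ |t₃|) :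
    mengerPts (t₁, f t₁) (0, 0) (t₃, f t₃) = 2 * |slope (fun t => f t / t) t₁ t₃| := by
  have h₁₃ : 0 < t₃ - t₁ := sub_pos.2 (h₁.trans h₃)
  rw [abs_of_neg h₁] at hf₁
  rw [abs_of_pos h₃] at hf₃
  have d₁ : dist (t₁, f t₁) ((0 : ℝ), (0 : ℝ)) = -t₁ := by
    simp [Prod.dist_eq, abs_of_neg h₁, hf₁]
  have d₂ : dist ((0 : ℝ), (0 : ℝ)) (t₃, f t₃) = t₃ := by
    simp [Prod.dist_eq, Real.dist_eq, abs_of_pos h₃, hf₃]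
  have d₃ : dist (t₃, f t₃) (t₁, f t₁) = t₃ - t₁ := by
    have : |f t₃ - f t₁| ≤ t₃ - t₁ := (abs_sub _ _).trans (by linarith)
    simp [Prod.dist_eq, Real.dist_eq, abs_of_pos h₁₃, this]
  rw [mengerPts, d₁, d₂, d₃, slope_def_field]
  have : t₁ ≠ 0 := h₁.ne
  have : t₃ ≠ 0 := h₃.ne'
  have hD : 0 < -t₁ * t₃ * (t₃ - t₁) := mul_pos (mul_pos (neg_pos.2 h₁) h₃) h₁₃
  rw [← abs_of_pos hD, mul_div_assoc, ← abs_div]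
  congr 2
  field_simp
  ring

theorem tendsto_slope_nhdsLT_prod_nhdsGT {h : ℝ → ℝ} {L : ℝ}
    (hL : Tendsto (fun t => h t / t) (𝓝[≠] 0) (𝓝 L)) :
    Tendsto (fun p : ℝ × ℝ => slope h p.1 p.2) (𝓝[<] 0 ×ˢ 𝓝[>] 0) (𝓝 L) := by
  set e : ℝ → ℝ := fun t => h t / t - L
  have he : Tendsto e (𝓝[≠] 0) (𝓝 0) := by simpa using hL.sub_const L
  have hbound : ∀ᶠ p : ℝ × ℝ in 𝓝[<] 0 ×ˢ 𝓝[>] 0,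
      |slope h p.1 p.2 - L| ≤ |e p.1| + |e p.2| := by
    filter_upwards [prod_mem_prod self_mem_nhdsWithin self_mem_nhdsWithin]
      with ⟨t₁, t₃⟩ ⟨h₁, h₃⟩
    simp only [mem_Iio, mem_Ioi] at h₁ h₃
    have hlt : 0 < t₃ - t₁ := by linarith
    have : t₁ ≠ 0 := h₁.ne
    have : t₃ ≠ 0 := h₃.ne'
    have hid : slope h t₁ t₃ - L = (-t₁ * e t₁ + t₃ * e t₃) / (t₃ - t₁) := by
      simp only [e, slope_def_field]
      field_simp
      ring
    rw [hid, abs_div, abs_of_pos hlt, div_le_iff₀ hlt]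
    calc |-t₁ * e t₁ + t₃ * e t₃| ≤ -t₁ * |e t₁| + t₃ * |e t₃| := by
          refine (abs_add_le _ _).trans_eq ?_
          rw [abs_mul, abs_mul, abs_of_pos (neg_pos.2 h₁), abs_of_pos h₃]
      _ ≤ (|e t₁| + |e t₃|) * (t₃ - t₁) := by
          nlinarith [abs_nonneg (e t₁), abs_nonneg (e t₃)]
  have hsum : Tendsto (fun p : ℝ × ℝ => |e p.1| + |e p.2|) (𝓝[<] 0 ×ˢ 𝓝[>] 0) (𝓝 0) := by
    have h₁ : Tendsto (fun p : ℝ × ℝ => |e p.1|) (𝓝[<] 0 ×ˢ 𝓝[>] 0) (𝓝 0) := by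
      simpa using (he.comp tendsto_fst_nhdsLT_prod_s5).abs
    have h₃ : Tendsto (fun p : ℝ × ℝ => |e p.2|) (𝓝[<] 0 ×ˢ 𝓝[>] 0) (𝓝 0) := by
      simpa using (he.comp tendsto_snd_prod_nhdsGT).abs
    simpa using h₁.add h₃
  exact tendsto_sub_nhds_zero_iff.1 (squeeze_zero_norm' hbound hsum)

theorem tendsto_div_div_of_isLittleO_sq {f : ℝ → ℝ} {c : ℝ}
    (hf : (fun t => f t - c * t ^ 2) =o[𝓝 0] fun t => t ^ 2) :
    Tendsto (fun t => f t / t / t) (𝓝[≠] 0) (𝓝 c) := by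
  have hlim : Tendsto (fun t => (f t - c * t ^ 2) / t ^ 2 + c) (𝓝[≠] 0) (𝓝 (0 + c)) :=
    (hf.tendsto_div_nhds_zero.mono_left nhdsWithin_le_nhds).add_const c
  rw [zero_add] at hlim
  refine hlim.congr' ?_
  filter_upwards [self_mem_nhdsWithin] with t (ht : t ≠ 0)
  field_simp
  ring

theorem eventually_abs_le_abs_of_tendsto_div_div {f : ℝ → ℝ} {c : ℝ}
    (hf : Tendsto (fun t => f t / t / t) (𝓝[≠] 0) (𝓝 c)) :
    ∀ᶠ t in 𝓝[≠] (0 : ℝ), |f t| ≤ |t| := by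
  have hlim : Tendsto (fun t => f t / t / t * t) (𝓝[≠] 0) (𝓝 (c * 0)) :=
    hf.mul (tendsto_id.mono_left nhdsWithin_le_nhds)
  rw [mul_zero] at hlim
  filter_upwards [hlim.eventually (eventually_abs_sub_lt 0 one_pos), self_mem_nhdsWithin]
    with t ht (ht0 : t ≠ 0)
  rw [sub_zero, div_mul_cancel₀ _ ht0, abs_div, div_lt_one (abs_pos.2 ht0)] at ht
  exact ht.le

theorem osculating_curvature_of_graph_general
    (f : ℝ → ℝ) (A : ℝ) (hA : 0 ≤ A)
    (hf2 : (fun t => f t - A / 2 * t ^ 2) =o[𝓝 0] fun t => t ^ 2) :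
    Tendsto (fun p : ℝ × ℝ => mengerPts (p.1, f p.1) (0, 0) (p.2, f p.2))
      ((𝓝[<] (0 : ℝ)) ×ˢ (𝓝[>] (0 : ℝ))) (𝓝 A) := by
  have hquot := tendsto_div_div_of_isLittleO_sq hf2
  have hsmall := eventually_abs_le_abs_of_tendsto_div_div hquot
  have hgraph : (fun p : ℝ × ℝ => 2 * |slope (fun t => f t / t) p.1 p.2|)
      =ᶠ[𝓝[<] 0 ×ˢ 𝓝[>] 0] fun p => mengerPts (p.1, f p.1) (0, 0) (p.2, f p.2) := by
    filter_upwards [prod_mem_prod self_mem_nhdsWithin self_mem_nhdsWithin,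
      tendsto_fst_nhdsLT_prod_s5.eventually hsmall, tendsto_snd_prod_nhdsGT.eventually hsmall]
      with p ⟨h₁, h₃⟩ hf₁ hf₃
    exact (mengerPts_graph_eq_two_mul_abs_slope f h₁ h₃ hf₁ hf₃).symm
  have hlim := ((tendsto_slope_nhdsLT_prod_nhdsGT hquot).abs.const_mul 2).congr' hgraph
  rwa [abs_of_nonneg (by positivity : 0 ≤ A / 2), mul_div_cancel₀ A two_ne_zero] at hlim

/-- **Osculating curvature of a convex graph** (Proposition A.1 of the paper): if `f` is
convex with `f 0 = 0`, `f'(0) = 0` and `f(t) = (A/2)t² + o(t²)` with `A ≥ 0`, then the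
Menger curvature of `(t₁, f t₁)`, `(0,0)`, `(t₃, f t₃)` tends to `A` as `t₁ → 0⁻`,
`t₃ → 0⁺`. -/
theorem osculating_curvature_of_graph
    (f : ℝ → ℝ) (A : ℝ) (hA : 0 ≤ A)
    (hconv : ConvexOn ℝ Set.univ f)
    (hf0 : f 0 = 0)
    (hd : HasDerivAt f 0 0)
    (hf2 : (fun t => f t - A / 2 * t ^ 2) =o[𝓝 0] fun t => t ^ 2) :
    Tendsto (fun p : ℝ × ℝ => mengerPts (p.1, f p.1) (0, 0) (p.2, f p.2))
      ((𝓝[<] (0 : ℝ)) ×ˢ (𝓝[>] (0 : ℝ))) (𝓝 A) :=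
  osculating_curvature_of_graph_general f A hA hf2
end

section
/- Let f : ℝ → ℝ be convex with f(0) = 0, f'(0) = 0, and second-order expansion f(t) = (A/2)t² + o(t²) with A ≥ 0. For points p_i = (t_i, f(t_i)) with t₁ < t₂ < t₃, t₁ < 0 < t₃, suppose additionally |t₁ - t₂| ≥ (1/4)|t₃ - t₁| and |t₂ - t₃| ≥ (1/4)|t₃ - t₁|. Then the Menger curvature χ₀(p₁,p₂,p₃) = 4·Area(△p₁p₂p₃)/(|p₁p₂||p₂p₃||p₃p₁|) converges to A as t₁, t₂, t₃ → 0. -/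
open Real Filter Set
open scoped Topology

private lemma aux_fbound (A e fv t LL : ℝ) (hA : 0 ≤ A) (he : 0 ≤ e)
    (h1 : |fv - A / 2 * t ^ 2| ≤ e * t ^ 2) (htL : t ^ 2 ≤ LL ^ 2) :
    |fv| ≤ ((A + 2 * e) / 2) * LL ^ 2 := by
  have h3 : |fv| ≤ |fv - A / 2 * t ^ 2| + |A / 2 * t ^ 2| := by
    calc |fv| = |(fv - A / 2 * t ^ 2) + A / 2 * t ^ 2| := by ring_nf
      _ ≤ _ := abs_add_le _ _
  have h2 : |A / 2 * t ^ 2| = A / 2 * t ^ 2 := abs_of_nonneg (by positivity)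
  nlinarith [sq_nonneg t]

private lemma aux_err (a LL e r1 r2 r3 : ℝ) (ha0 : 0 ≤ a) (haL : a ≤ LL)
    (h1 : |r1| ≤ e) (h2 : |r2| ≤ e) (h3 : |r3| ≤ e) :
    |2 * (a * (r3 - r1) - (r2 - r1) * LL)| ≤ 8 * e * LL := by
  have he : 0 ≤ e := le_trans (abs_nonneg _) h1
  have hL0 : 0 ≤ LL := le_trans ha0 haL
  have b1 := abs_le.mp h1
  have b2 := abs_le.mp h2
  have b3 := abs_le.mp h3
  rw [abs_le]
  constructor <;> nlinarith [mul_nonneg he hL0, mul_le_mul_of_nonneg_right haL he]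

private lemma aux_P16 (a b LL : ℝ) (hL : 0 < LL) (ha : LL / 4 ≤ a) (hb : LL / 4 ≤ b) :
    LL ^ 3 / 16 ≤ a * b * LL := by
  have h1 : LL / 4 * (LL / 4) ≤ a * b :=
    mul_le_mul ha hb (by positivity) (le_trans (by positivity) ha)
  calc LL ^ 3 / 16 = LL / 4 * (LL / 4) * LL := by ring
    _ ≤ a * b * LL := mul_le_mul_of_nonneg_right h1 hL.le

set_option maxHeartbeats 2000000 in
/-- **Osculating curvature computed along not-too-thin triangles** (Proposition 2.9 of
the paper): if `f` is convex with `f 0 = 0`, `f'(0) = 0` and `f(t) = (A/2)t² + o(t²)`,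
`A ≥ 0`, then the Menger curvature of `(tᵢ, f tᵢ)`, `i = 1,2,3`, tends to `A` over all
triples with `t₁ < t₂ < t₃`, `t₁ < 0 < t₃`, as long as `|t₁ - t₂| ≥ ¼|t₃ - t₁|` and
`|t₂ - t₃| ≥ ¼|t₃ - t₁|`. -/
theorem osculating_curvature_not_thin_triangles
    (f : ℝ → ℝ) (A : ℝ) (hA : 0 ≤ A)
    (hconv : ConvexOn ℝ Set.univ f)
    (hf0 : f 0 = 0)
    (hd : HasDerivAt f 0 0)
    (hf2 : (fun t => f t - A / 2 * t ^ 2) =o[𝓝 0] fun t => t ^ 2) :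
    ∀ ε > 0, ∃ δ > 0, ∀ t₁ t₂ t₃ : ℝ,
      t₁ < t₂ → t₂ < t₃ → t₁ < 0 → 0 < t₃ → |t₁| < δ → |t₃| < δ →
      (1 / 4) * |t₃ - t₁| ≤ |t₁ - t₂| → (1 / 4) * |t₃ - t₁| ≤ |t₂ - t₃| →
      |mengerPts (t₁, f t₁) (t₂, f t₂) (t₃, f t₃) - A| < ε := by
  intro ε hε
  set ε' : ℝ := ε / 256 with hε'def
  have hε'pos : 0 < ε' := by positivity
  have h := hf2.def hε'pos
  rw [Metric.eventually_nhds_iff] at h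
  obtain ⟨δ₀, hδ₀, hr⟩ := h
  have hrem : ∀ t : ℝ, |t| < δ₀ → |f t - A / 2 * t ^ 2| ≤ ε' * t ^ 2 := by
    intro t ht
    have := hr (show dist t 0 < δ₀ by rwa [Real.dist_eq, sub_zero])
    simpa [abs_of_nonneg (sq_nonneg t)] using this
  clear hr hconv hf0 hd hf2
  set C : ℝ := A + 2 * ε' with hCdef
  have hC : 0 < C := by positivity
  refine ⟨min δ₀ (1 / (8 * C)), by positivity, ?_⟩
  intro t₁ t₂ t₃ h12 h23 h1 h3 hd1 hd3 hthin1 hthin2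
  set L : ℝ := t₃ - t₁ with hLdef
  have hL : 0 < L := by simp only [hLdef]; linarith
  have hd1' : |t₁| < δ₀ := lt_of_lt_of_le hd1 (min_le_left _ _)
  have hd3' : |t₃| < δ₀ := lt_of_lt_of_le hd3 (min_le_left _ _)
  have ht1 : -t₁ < min δ₀ (1 / (8 * C)) := by rwa [abs_of_neg h1] at hd1
  have ht3 : t₃ < min δ₀ (1 / (8 * C)) := by rwa [abs_of_pos h3] at hd3
  have hd2' : |t₂| < δ₀ := by
    rw [abs_lt]; constructor
    · linarith [lt_of_lt_of_le ht1 (min_le_left _ _)]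
    · linarith [lt_of_lt_of_le ht3 (min_le_left _ _)]
  have hLsmall : C * L ≤ 1 / 4 := by
    have h1' : -t₁ < 1 / (8 * C) := lt_of_lt_of_le ht1 (min_le_right _ _)
    have h3' : t₃ < 1 / (8 * C) := lt_of_lt_of_le ht3 (min_le_right _ _)
    have hL4 : L ≤ 1 / (4 * C) := by
      have : 1 / (8 * C) + 1 / (8 * C) = 1 / (4 * C) := by field_simp; ring
      simp only [hLdef]; linarith
    calc C * L ≤ C * (1 / (4 * C)) := mul_le_mul_of_nonneg_left hL4 hC.le
      _ = 1 / 4 := by field_simp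
  clear ht1 ht3 hd1 hd3
  have htL1 : |t₁| ≤ L := by rw [abs_of_neg h1]; simp only [hLdef]; linarith
  have htL2 : |t₂| ≤ L := by rw [abs_le]; constructor <;> (simp only [hLdef]; linarith)
  have htL3 : |t₃| ≤ L := by rw [abs_of_pos h3]; simp only [hLdef]; linarith
  set r₁ : ℝ := f t₁ - A / 2 * t₁ ^ 2 with hr1def
  set r₂ : ℝ := f t₂ - A / 2 * t₂ ^ 2 with hr2def
  set r₃ : ℝ := f t₃ - A / 2 * t₃ ^ 2 with hr3def
  have hsq1 : t₁ ^ 2 ≤ L ^ 2 := by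
    rw [← sq_abs]; exact pow_le_pow_left₀ (abs_nonneg _) htL1 2
  have hsq2 : t₂ ^ 2 ≤ L ^ 2 := by
    rw [← sq_abs]; exact pow_le_pow_left₀ (abs_nonneg _) htL2 2
  have hsq3 : t₃ ^ 2 ≤ L ^ 2 := by
    rw [← sq_abs]; exact pow_le_pow_left₀ (abs_nonneg _) htL3 2
  have hR1 : |r₁| ≤ ε' * L ^ 2 :=
    le_trans (hrem t₁ hd1') (mul_le_mul_of_nonneg_left hsq1 hε'pos.le)
  have hR2 : |r₂| ≤ ε' * L ^ 2 :=
    le_trans (hrem t₂ hd2') (mul_le_mul_of_nonneg_left hsq2 hε'pos.le)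
  have hR3 : |r₃| ≤ ε' * L ^ 2 :=
    le_trans (hrem t₃ hd3') (mul_le_mul_of_nonneg_left hsq3 hε'pos.le)
  have hf1 : |f t₁| ≤ (C / 2) * L ^ 2 := aux_fbound A ε' _ t₁ L hA hε'pos.le (hrem t₁ hd1') hsq1
  have hf2' : |f t₂| ≤ (C / 2) * L ^ 2 := aux_fbound A ε' _ t₂ L hA hε'pos.le (hrem t₂ hd2') hsq2
  have hf3 : |f t₃| ≤ (C / 2) * L ^ 2 := aux_fbound A ε' _ t₃ L hA hε'pos.le (hrem t₃ hd3') hsq3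
  clear hd1' hd2' hd3' hrem
  set α : ℝ := t₂ - t₁ with hαdef
  set β : ℝ := t₃ - t₂ with hβdef
  have hα : 0 < α := by simp only [hαdef]; linarith
  have hβ : 0 < β := by simp only [hβdef]; linarith
  have habsL : |L| = L := abs_of_pos hL
  have hα4 : L / 4 ≤ α := by
    have h' : |t₁ - t₂| = α := by rw [abs_sub_comm]; exact abs_of_pos hα
    rw [habsL, h'] at hthin1; linarith
  have hβ4 : L / 4 ≤ β := by
    have h' : |t₂ - t₃| = β := by rw [abs_sub_comm]; exact abs_of_pos hβ
    rw [habsL, h'] at hthin2; linarith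
  set D : ℝ := C * L ^ 2 with hDdef
  have hD1 : |f t₁| ≤ D / 2 := le_trans hf1 (le_of_eq (by rw [hDdef]; ring))
  have hD2 : |f t₂| ≤ D / 2 := le_trans hf2' (le_of_eq (by rw [hDdef]; ring))
  have hD3 : |f t₃| ≤ D / 2 := le_trans hf3 (le_of_eq (by rw [hDdef]; ring))
  have hCL2 : D ≤ L / 4 := by
    calc D = (C * L) * L := by rw [hDdef]; ring
      _ ≤ (1 / 4) * L := mul_le_mul_of_nonneg_right hLsmall hL.le
      _ = L / 4 := by ring
  -- the three distances are the horizontal gaps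
  have hdist12 : dist ((t₁, f t₁) : ℝ × ℝ) (t₂, f t₂) = α := by
    rw [Prod.dist_eq]
    simp only [Real.dist_eq]
    have h' : |t₁ - t₂| = α := by rw [abs_sub_comm]; exact abs_of_pos hα
    rw [h', max_eq_left]
    have hle : |f t₁ - f t₂| ≤ D := by
      calc |f t₁ - f t₂| ≤ |f t₁| + |f t₂| := abs_sub _ _
        _ ≤ D := by linarith
    linarith
  have hdist23 : dist ((t₂, f t₂) : ℝ × ℝ) (t₃, f t₃) = β := by
    rw [Prod.dist_eq]
    simp only [Real.dist_eq]
    have h' : |t₂ - t₃| = β := by rw [abs_sub_comm]; exact abs_of_pos hβ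
    rw [h', max_eq_left]
    have hle : |f t₂ - f t₃| ≤ D := by
      calc |f t₂ - f t₃| ≤ |f t₂| + |f t₃| := abs_sub _ _
        _ ≤ D := by linarith
    linarith
  have hdist31 : dist ((t₃, f t₃) : ℝ × ℝ) (t₁, f t₁) = L := by
    rw [Prod.dist_eq]
    simp only [Real.dist_eq]
    have h' : |t₃ - t₁| = L := habsL
    rw [h', max_eq_left]
    have hle : |f t₃ - f t₁| ≤ D := by
      calc |f t₃ - f t₁| ≤ |f t₃| + |f t₁| := abs_sub _ _
        _ ≤ D := by linarith
    linarith
  -- unfold menger curvature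
  have hP : 0 < α * β * L := by positivity
  set N : ℝ := (t₂ - t₁) * (f t₃ - f t₁) - (f t₂ - f t₁) * (t₃ - t₁) with hNdef
  have hM : mengerPts (t₁, f t₁) (t₂, f t₂) (t₃, f t₃) = 2 * |N| / (α * β * L) := by
    rw [mengerPts, hdist12, hdist23, hdist31]
  rw [hM]
  -- key identity and error bound
  have hid : 2 * N - A * (α * β * L) = 2 * (α * (r₃ - r₁) - (r₂ - r₁) * L) := by
    simp only [hNdef, hr1def, hr2def, hr3def, hαdef, hβdef, hLdef]; ring
  have hαL : α ≤ L := by simp only [hαdef, hLdef]; linarith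
  have herr : |2 * N - A * (α * β * L)| ≤ 8 * ε' * L ^ 3 := by
    rw [hid]
    calc |2 * (α * (r₃ - r₁) - (r₂ - r₁) * L)| ≤ 8 * (ε' * L ^ 2) * L :=
          aux_err α L (ε' * L ^ 2) r₁ r₂ r₃ hα.le hαL hR1 hR2 hR3
      _ = 8 * ε' * L ^ 3 := by ring
  have hkey : |2 * |N| - A * (α * β * L)| ≤ 8 * ε' * L ^ 3 := by
    have h0 : A * (α * β * L) = |A * (α * β * L)| := (abs_of_nonneg (by positivity)).symm
    have h2 : |2 * N| = 2 * |N| := by rw [abs_mul]; norm_num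
    calc |2 * |N| - A * (α * β * L)|
        = abs (|2 * N| - |A * (α * β * L)|) := by rw [h2, ← h0]
      _ ≤ |2 * N - A * (α * β * L)| := abs_abs_sub_abs_le_abs_sub _ _
      _ ≤ _ := herr
  -- conclude
  have hfrac : 2 * |N| / (α * β * L) - A = (2 * |N| - A * (α * β * L)) / (α * β * L) := by
    field_simp
  rw [hfrac, abs_div, abs_of_pos hP, div_lt_iff₀ hP]
  have hP16 : L ^ 3 / 16 ≤ α * β * L := aux_P16 α β L hL hα4 hβ4
  have hL3 : 0 < L ^ 3 := by positivity
  calc |2 * |N| - A * (α * β * L)| ≤ 8 * ε' * L ^ 3 := hkey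
    _ = (ε / 32) * L ^ 3 := by rw [hε'def]; ring
    _ < ε * (L ^ 3 / 16) := by
        have : (ε / 32) * L ^ 3 < (ε / 16) * L ^ 3 := by
          apply mul_lt_mul_of_pos_right _ hL3; linarith
        linarith [this]
    _ ≤ ε * (α * β * L) := mul_le_mul_of_nonneg_left hP16 hε.le
end
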